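/- The map Λ GL(n,ℂ) → Λ_τ GL(n,ℂ), γ ↦ Γ_τ(γ), where Γ_τ(γ)(λ) = s(λ)^{−1} γ(λ^k) s(λ), is a group isomorphism from the loop group of GL(n,ℂ) onto the subgroup Λ_τ GL(n,ℂ) of loops γ satisfying τ(γ(λ)) = γ(ωλ), where τ = Ad_{s(ω)}^{−1} and s(λ) = Σ_{i=0}^{k−1} λ^i π_{A_i} for a fixed orthogonal decomposition ℂⁿ = ⊕_{i=0}^{k−1} A_i. -/
import Mathlib


open scoped Matrix

noncomputable section

attribute [local instance] Matrix.normedAddCommGroup Matrix.normedSpace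

/- STATEMENT 7: The map Λ GL(n,ℂ) → Λ_τ GL(n,ℂ), γ ↦ Γ_τ(γ), where
Γ_τ(γ)(λ) = s(λ)^{−1} γ(λ^k) s(λ), is a group isomorphism from the loop group of GL(n,ℂ)
onto the subgroup Λ_τ GL(n,ℂ) of loops γ satisfying τ(γ(λ)) = γ(ωλ), where
τ = Ad_{s(ω)}^{−1} and s(λ) = Σ_{i=0}^{k−1} λ^i π_{A_i} for a fixed orthogonal
decomposition ℂⁿ = ⊕_{i=0}^{k−1} A_i.  Loops are parametrized by θ ∈ ℝ via λ = e^{iθ},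
so that λ ↦ λ^k becomes θ ↦ kθ and λ ↦ ωλ becomes θ ↦ θ + 2π/k. -/

/-- The loop group `ΛGL(n,ℂ)` of smooth `2π`-periodic maps into `GL(n,ℂ)`. -/
def LoopGL (n : ℕ) : Set (ℝ → GL (Fin n) ℂ) :=
  {γ | Function.Periodic γ (2 * Real.pi) ∧
    ContDiff ℝ (⊤ : ℕ∞) (fun θ => (γ θ : Matrix (Fin n) (Fin n) ℂ))}

/-- The twisted loop group `Λ_τ GL(n,ℂ)` for `τ = Ad_{s(ω)}⁻¹`. -/
def TwistedLoopGL (n k : ℕ) (s : ℝ → GL (Fin n) ℂ) : Set (ℝ → GL (Fin n) ℂ) :=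
  {γ | γ ∈ LoopGL n ∧ ∀ θ : ℝ,
    (s (2 * Real.pi / k))⁻¹ * γ θ * s (2 * Real.pi / k) = γ (θ + 2 * Real.pi / k)}

/-- The map `Γ_τ`, `Γ_τ(γ)(λ) = s(λ)⁻¹ γ(λ^k) s(λ)`. -/
def GammaTau (n k : ℕ) (s : ℝ → GL (Fin n) ℂ) (γ : ℝ → GL (Fin n) ℂ) : ℝ → GL (Fin n) ℂ :=
  fun θ => (s θ)⁻¹ * γ (k * θ) * s θ

/-- Entries of a smooth matrix-valued function are smooth. -/
lemma matEntry {n : ℕ} {f : ℝ → Matrix (Fin n) (Fin n) ℂ} (h : ContDiff ℝ (⊤ : ℕ∞) f)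
    (i j : Fin n) : ContDiff ℝ (⊤ : ℕ∞) fun θ => f θ i j :=
  contDiff_pi.1 (contDiff_pi.1 h i) j

/-- A matrix-valued function with smooth entries is smooth. -/
lemma matOfEntries {n : ℕ} {f : ℝ → Matrix (Fin n) (Fin n) ℂ}
    (h : ∀ i j, ContDiff ℝ (⊤ : ℕ∞) fun θ => f θ i j) : ContDiff ℝ (⊤ : ℕ∞) f :=
  contDiff_pi.2 fun i => contDiff_pi.2 fun j => h i j

/-- Products of smooth matrix-valued functions are smooth. -/
lemma matMul {n : ℕ} {f g : ℝ → Matrix (Fin n) (Fin n) ℂ} (hf : ContDiff ℝ (⊤ : ℕ∞) f)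
    (hg : ContDiff ℝ (⊤ : ℕ∞) g) : ContDiff ℝ (⊤ : ℕ∞) fun θ => f θ * g θ := by
  refine matOfEntries fun i j => ?_
  simp only [Matrix.mul_apply]
  exact ContDiff.sum fun l _ => (matEntry hf i l).mul (matEntry hg l j)

lemma expSmooth : ContDiff ℝ (⊤ : ℕ∞) fun θ : ℝ => Complex.exp (θ * Complex.I) := by
  have h1 : ContDiff ℝ (⊤ : ℕ∞) Complex.exp := Complex.contDiff_exp
  exact h1.comp ((Complex.ofRealCLM.contDiff).mul contDiff_const)

lemma expAdd (θ φ : ℝ) : Complex.exp ((↑(θ + φ) : ℂ) * Complex.I)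
    = Complex.exp (θ * Complex.I) * Complex.exp (φ * Complex.I) := by
  rw [← Complex.exp_add]; push_cast; ring_nf

theorem gammaTau_group_isomorphism_onto_twisted_loops
    (n k : ℕ) (hk : 2 ≤ k)
    (P : Fin k → Matrix (Fin n) (Fin n) ℂ)
    (hherm : ∀ i, (P i)ᴴ = P i) (hidem : ∀ i, P i * P i = P i)
    (horth : ∀ i j, i ≠ j → P i * P j = 0) (hsum : (∑ i : Fin k, P i) = 1)
    (s : ℝ → GL (Fin n) ℂ)
    (hs : ∀ θ : ℝ, (s θ : Matrix (Fin n) (Fin n) ℂ)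
        = ∑ i : Fin k, Complex.exp (θ * Complex.I) ^ (i : ℕ) • P i) :
    (∀ γ ∈ LoopGL n, GammaTau n k s γ ∈ TwistedLoopGL n k s) ∧
    (∀ γ₁ ∈ LoopGL n, ∀ γ₂ ∈ LoopGL n,
      GammaTau n k s (γ₁ * γ₂) = GammaTau n k s γ₁ * GammaTau n k s γ₂) ∧
    (∀ γ₁ ∈ LoopGL n, ∀ γ₂ ∈ LoopGL n, GammaTau n k s γ₁ = GammaTau n k s γ₂ → γ₁ = γ₂) ∧
    (∀ δ ∈ TwistedLoopGL n k s, ∃ γ ∈ LoopGL n, GammaTau n k s γ = δ) := by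
  have hk0 : (k : ℝ) ≠ 0 := by positivity
  -- s is multiplicative
  have hsmul : ∀ θ φ : ℝ, s θ * s φ = s (θ + φ) := by
    intro θ φ
    apply Units.ext
    rw [Units.val_mul, hs, hs, hs, Finset.sum_mul_sum]
    refine Finset.sum_congr rfl fun i _ => ?_
    rw [Finset.sum_eq_single i]
    · rw [smul_mul_smul_comm, hidem i, expAdd, mul_pow]
    · intro j _ hji
      rw [smul_mul_smul_comm, horth i j hji.symm, smul_zero]
    · intro hi; exact absurd (Finset.mem_univ i) hi
  have hs0 : s 0 = 1 := by
    apply Units.ext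
    rw [hs]
    simp [hsum]
  have hsinv : ∀ θ : ℝ, (s θ)⁻¹ = s (-θ) := by
    intro θ
    refine inv_eq_of_mul_eq_one_right ?_
    rw [hsmul, add_neg_cancel, hs0]
  have hsper : ∀ θ : ℝ, s (θ + 2 * Real.pi) = s θ := by
    intro θ
    apply Units.ext
    rw [hs, hs]
    have : Complex.exp ((↑(θ + 2 * Real.pi) : ℂ) * Complex.I)
        = Complex.exp (θ * Complex.I) := by
      rw [expAdd]
      have : Complex.exp ((↑(2 * Real.pi) : ℂ) * Complex.I) = 1 := by
        push_cast
        rw [Complex.exp_two_pi_mul_I]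
      rw [this, mul_one]
    rw [this]
  have hssm : ContDiff ℝ (⊤ : ℕ∞) fun θ => (s θ : Matrix (Fin n) (Fin n) ℂ) := by
    refine matOfEntries fun a b => ?_
    simp only [hs, Matrix.sum_apply, Matrix.smul_apply, smul_eq_mul]
    exact ContDiff.sum fun i _ => (expSmooth.pow _).mul contDiff_const
  have hsinvsm : ContDiff ℝ (⊤ : ℕ∞) fun θ => (((s θ)⁻¹ : GL (Fin n) ℂ) : Matrix (Fin n) (Fin n) ℂ) := by
    simp only [hsinv]
    exact hssm.comp contDiff_neg
  refine ⟨?_, ?_, ?_, ?_⟩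
  · -- maps into the twisted loop group
    rintro γ ⟨hper, hsm⟩
    refine ⟨⟨?_, ?_⟩, ?_⟩
    · intro θ
      show (s (θ + 2 * Real.pi))⁻¹ * γ (k * (θ + 2 * Real.pi)) * s (θ + 2 * Real.pi)
          = (s θ)⁻¹ * γ (k * θ) * s θ
      have h2 : (k : ℝ) * (θ + 2 * Real.pi) = k * θ + k * (2 * Real.pi) := by ring
      rw [h2, (hper.nat_mul k) ((k : ℝ) * θ), hsper]
    · simp only [GammaTau, Units.val_mul]
      refine matMul (matMul hsinvsm ?_) hssm
      exact hsm.comp (contDiff_const.mul contDiff_id)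
    · intro θ
      simp only [GammaTau]
      have h1 : (k : ℝ) * (θ + 2 * Real.pi / k) = k * θ + 2 * Real.pi := by
        field_simp
      rw [h1, hper ((k : ℝ) * θ), ← hsmul, mul_inv_rev]
      group
  · -- multiplicative
    intro γ₁ _ γ₂ _
    funext θ
    simp only [GammaTau, Pi.mul_apply]
    group
  · -- injective
    intro γ₁ _ γ₂ _ h
    funext x
    have h1 := congrFun h (x / k)
    simp only [GammaTau] at h1
    have hx : (k : ℝ) * (x / k) = x := by field_simp
    rw [hx] at h1
    exact mul_left_cancel (mul_right_cancel h1)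
  · -- surjective onto the twisted loop group
    rintro δ ⟨⟨hper, hsm⟩, htw⟩
    refine ⟨fun θ => s (θ / k) * δ (θ / k) * (s (θ / k))⁻¹, ⟨?_, ?_⟩, ?_⟩
    · intro θ
      show s ((θ + 2 * Real.pi) / k) * δ ((θ + 2 * Real.pi) / k) * (s ((θ + 2 * Real.pi) / k))⁻¹
          = s (θ / k) * δ (θ / k) * (s (θ / k))⁻¹
      have h1 : (θ + 2 * Real.pi) / k = θ / k + 2 * Real.pi / k := by ring
      rw [h1, ← htw (θ / k), ← hsmul, mul_inv_rev]
      group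
    · simp only [Units.val_mul]
      have hdiv : ContDiff ℝ (⊤ : ℕ∞) fun θ : ℝ => θ / (k : ℝ) := contDiff_id.div_const _
      exact matMul (matMul (hssm.comp hdiv) (hsm.comp hdiv)) (hsinvsm.comp hdiv)
    · funext θ
      simp only [GammaTau]
      have hx : ((k : ℝ) * θ) / k = θ := by field_simp
      rw [hx]
      group

end
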